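/- For every integer N ≥ 1, the identity P_{3N} · (1 − q^{3N}) = P_{3N−1} − P_{3N−3} · q^{3N} holds in the formal power series ring ℤ[[x, y, q]]. -/

import Mathlib

/-- The `i`-th largest part (0-indexed) of the weakly decreasing list of parts of a
partition of `n` (entries beyond the number of parts are `0`, which realizes the
padding by zeros). -/
def nthPart {n : ℕ} (P : n.Partition) (i : ℕ) : ℕ :=
  ((P.parts.sort (· ≤ ·)).reverse).getD i 0

/-- The `j`-th component (`1 ≤ j ≤ m - 1`) of the alternating sum type modulo `m` of a
partition of `n`: `Σ_j = ∑_i (λ_{(i-1)m+j} - λ_{(i-1)m+j+1})` (1-indexed parts, padded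
by zeros; summing over `i < n + 1` covers every nonzero term). -/
def altSumType (m : ℕ) {n : ℕ} (P : n.Partition) (j : ℕ) : ℕ :=
  ∑ i ∈ Finset.range (n + 1), (nthPart P (i * m + (j - 1)) - nthPart P (i * m + j))

/-- `aN N s1 s2 n` : the number of partitions of `n` with exactly `N` (positive) parts,
every part occurring at most twice, and alternating sum type modulo `3` equal to
`(s1, s2)`. -/
noncomputable def aN (N s1 s2 n : ℕ) : ℕ :=
  Nat.card {P : n.Partition // P.parts.card = N ∧ (∀ p, P.parts.count p ≤ 2) ∧
    altSumType 3 P 1 = s1 ∧ altSumType 3 P 2 = s2}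

/-- The formal power series `A_N ∈ ℤ[[x, y, q]]` (variables `x = X 0`, `y = X 1`,
`q = X 2`): `A_0 = 1` and, for `N ≥ 1`,
`A_N = ∑_{Σ₁, Σ₂ ≥ 0, n ≥ 1} a_N(Σ₁, Σ₂; n) x^{Σ₁} y^{Σ₂} q^n`. -/
noncomputable def Aser (N : ℕ) : MvPowerSeries (Fin 3) ℤ :=
  if N = 0 then 1
  else fun e => if 1 ≤ e 2 then (aN N (e 0) (e 1) (e 2) : ℤ) else 0

/-- The variable `x`. -/
noncomputable def Xv : MvPowerSeries (Fin 3) ℤ := MvPowerSeries.X 0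

/-- The variable `y`. -/
noncomputable def Yv : MvPowerSeries (Fin 3) ℤ := MvPowerSeries.X 1

/-- The variable `q`. -/
noncomputable def Qv : MvPowerSeries (Fin 3) ℤ := MvPowerSeries.X 2

/-- The formal power series `P_N = ∑_{i=0}^{N} A_i ∈ ℤ[[x, y, q]]`. -/
noncomputable def Pser (N : ℕ) : MvPowerSeries (Fin 3) ℤ :=
  ∑ i ∈ Finset.range (N + 1), Aser i

/-!
Removing the first column of the Young diagram of a partition of `n` with exactly `k` parts,
each occurring at most twice, leaves a partition of `n - k` with `k - 2`, `k - 1` or `k` parts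
(according as `1` occurs twice, once or not at all), again with each part occurring at most
twice. When `3 ∣ k` the column ends at a block boundary, so the alternating sum type is
unchanged. Hence `A_k = (A_{k-2} + A_{k-1} + A_k) q^k` for `3 ∣ k`, and the identity follows
from `P_{3N} = P_{3N-3} + A_{3N-2} + A_{3N-1} + A_{3N}`.
-/

namespace Nat.Partition

variable {n k : ℕ}

lemma count_parts_zero (P : n.Partition) : P.parts.count 0 = 0 :=
  Multiset.count_eq_zero.2 fun h => (P.parts_pos h).false

lemma card_parts_le (P : n.Partition) : P.parts.card ≤ n := by
  simpa [P.parts_sum] using Multiset.card_nsmul_le_sum (a := 1) fun _ h => P.parts_pos h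

def addColumn (Q : n.Partition) (hk : Q.parts.card ≤ k) : (n + k).Partition where
  parts := Q.parts.map (· + 1) + Multiset.replicate (k - Q.parts.card) 1
  parts_pos := by
    simp only [Multiset.mem_add, Multiset.mem_map, Multiset.mem_replicate]
    rintro _ (⟨x, -, rfl⟩ | ⟨-, rfl⟩) <;> omega
  parts_sum := by simp [Multiset.sum_map_add, Q.parts_sum]; omega

def removeColumn (P : (n + k).Partition) (hP : P.parts.card = k) : n.Partition where
  parts := (P.parts.map (· - 1)).filter (· ≠ 0)
  parts_pos := by simp +contextual [Nat.pos_iff_ne_zero]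
  parts_sum := by
    have hzero : ((P.parts.map (· - 1)).filter fun x => ¬x ≠ 0).sum = 0 :=
      Multiset.sum_eq_zero fun x hx => by simpa using (Multiset.mem_filter.1 hx).2
    have hsub := Multiset.sum_map_tsub P.parts (f := fun x => x) (g := fun _ => 1)
      fun x hx => P.parts_pos hx
    rw [← Multiset.sum_filter_add_sum_filter_not (· ≠ 0), hzero, add_zero] at hsub
    simpa [P.parts_sum, hP] using hsub

lemma card_addColumn (Q : n.Partition) (hk : Q.parts.card ≤ k) :
    (Q.addColumn hk).parts.card = k := by
  simp [addColumn]; omega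

lemma card_removeColumn_le (P : (n + k).Partition) (hP : P.parts.card = k) :
    (removeColumn P hP).parts.card ≤ k :=
  (Multiset.card_le_card (Multiset.filter_le _ _)).trans (by simp [hP])

lemma removeColumn_addColumn (Q : n.Partition) (hk : Q.parts.card ≤ k) :
    removeColumn (Q.addColumn hk) (card_addColumn Q hk) = Q := by
  ext1
  have hpos : ∀ x ∈ Q.parts, x ≠ 0 := fun x hx => (Q.parts_pos hx).ne'
  simp [removeColumn, addColumn, Multiset.map_replicate, Multiset.filter_add,
    Multiset.filter_eq_self.2 hpos, Multiset.mem_replicate]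

lemma addColumn_removeColumn (P : (n + k).Partition) (hP : P.parts.card = k) :
    (removeColumn P hP).addColumn (card_removeColumn_le P hP) = P := by
  ext1
  obtain ⟨s, hs, hsP⟩ : ∃ s, P.parts.map (· - 1) = s ∧ s.map (· + 1) = P.parts :=
    ⟨_, rfl, by
      rw [Multiset.map_map]
      exact (Multiset.map_congr rfl fun x hx => Nat.sub_add_cancel (P.parts_pos hx)).trans
        (Multiset.map_id _)⟩
  have hzeros : s.filter (fun x => ¬x ≠ 0) = Multiset.replicate (s.count 0) 0 := by
    simpa using Multiset.filter_eq' s 0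
  have hcard : k - (s.filter (· ≠ 0)).card = s.count 0 := by
    have hks : s.card = k := by rw [← hs, Multiset.card_map, hP]
    have := congrArg Multiset.card (s.filter_add_not (· ≠ 0))
    rw [Multiset.card_add, hzeros, Multiset.card_replicate, hks] at this
    omega
  simp only [addColumn, removeColumn, hs, hcard]
  conv_rhs => rw [← hsP, ← s.filter_add_not (· ≠ 0), Multiset.map_add, hzeros,
    Multiset.map_replicate]

def addColumnEquiv (n k : ℕ) :
    {Q : n.Partition // Q.parts.card ≤ k} ≃ {P : (n + k).Partition // P.parts.card = k} where
  toFun Q := ⟨Q.1.addColumn Q.2, card_addColumn Q.1 Q.2⟩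
  invFun P := ⟨removeColumn P.1 P.2, card_removeColumn_le P.1 P.2⟩
  left_inv Q := Subtype.ext (removeColumn_addColumn Q.1 Q.2)
  right_inv P := Subtype.ext (addColumn_removeColumn P.1 P.2)

variable (Q : n.Partition) (hk : Q.parts.card ≤ k)

lemma count_addColumn_one : (Q.addColumn hk).parts.count 1 = k - Q.parts.card := by
  have := Multiset.count_map_eq_count' (· + 1) Q.parts (add_left_injective 1) 0
  simp_all [addColumn, count_parts_zero]

lemma count_addColumn_add_two (p : ℕ) :
    (Q.addColumn hk).parts.count (p + 2) = Q.parts.count (p + 1) := by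
  have := Multiset.count_map_eq_count' (· + 1) Q.parts (add_left_injective 1) (p + 1)
  simp_all [addColumn, Multiset.count_replicate]

lemma forall_count_addColumn_le_iff (m : ℕ) :
    (∀ p, (Q.addColumn hk).parts.count p ≤ m) ↔
      (∀ p, Q.parts.count p ≤ m) ∧ k - Q.parts.card ≤ m := by
  constructor
  · intro h
    refine ⟨fun p => ?_, count_addColumn_one Q hk ▸ h 1⟩
    rcases p with _ | p
    · simp [count_parts_zero]
    · exact count_addColumn_add_two Q hk p ▸ h (p + 2)
  · rintro ⟨h, hc⟩ (_ | _ | p)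
    · simp [count_parts_zero]
    · exact (count_addColumn_one Q hk).symm ▸ hc
    · exact (count_addColumn_add_two Q hk p).symm ▸ h (p + 1)

lemma sort_addColumn : (Q.addColumn hk).parts.sort (· ≤ ·) =
    List.replicate (k - Q.parts.card) 1 ++ (Q.parts.sort (· ≤ ·)).map (· + 1) := by
  refine List.Perm.eq_of_pairwise' (Multiset.pairwise_sort _ _) ?_ ?_
  · refine List.pairwise_append.2 ⟨?_, ?_, ?_⟩
    · exact List.pairwise_replicate.2 (Or.inr le_rfl)
    · exact List.pairwise_map.2 ((Multiset.pairwise_sort _ _).imp Nat.succ_le_succ)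
    · simp +contextual [List.mem_replicate]
  · rw [← Multiset.coe_eq_coe, Multiset.sort_eq, ← Multiset.coe_add, ← Multiset.map_coe,
      Multiset.sort_eq, Multiset.coe_replicate]
    exact add_comm _ _

lemma nthPart_addColumn (i : ℕ) : nthPart (Q.addColumn hk) i - 1 = nthPart Q i := by
  simp only [nthPart, sort_addColumn, List.reverse_append, List.reverse_replicate,
    ← List.map_reverse]
  grind

end Nat.Partition

lemma nthPart_eq_zero_iff {n : ℕ} (P : n.Partition) (i : ℕ) :
    nthPart P i = 0 ↔ P.parts.card ≤ i := by
  unfold nthPart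
  rcases lt_or_ge i P.parts.card with hi | hi
  · have hl : i < ((P.parts.sort (· ≤ ·)).reverse).length := by simpa using hi
    rw [List.getD_eq_getElem _ _ hl, iff_false_intro (not_le.2 hi), iff_false]
    exact (P.parts_pos ((Multiset.mem_sort _).1 (List.mem_reverse.1 (List.getElem_mem hl)))).ne'
  · exact iff_of_true (List.getD_eq_default _ _ (by simpa using hi)) hi

lemma altSumType_eq_sum_range {m n : ℕ} (hm : 0 < m) (P : n.Partition) (j : ℕ) {L : ℕ}
    (hL : P.parts.card ≤ L) :
    altSumType m P j =
      ∑ i ∈ Finset.range L, (nthPart P (i * m + (j - 1)) - nthPart P (i * m + j)) := by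
  have hvanish : ∀ i ≥ P.parts.card, nthPart P (i * m + (j - 1)) - nthPart P (i * m + j) = 0 := by
    intro i hi
    rw [(nthPart_eq_zero_iff P _).2 ((hi.trans (Nat.le_mul_of_pos_right i hm)).trans
      (Nat.le_add_right _ _)), zero_tsub]
  rw [altSumType, Finset.eventually_constant_sum hvanish hL,
    Finset.eventually_constant_sum hvanish (by have := P.card_parts_le; omega)]

lemma altSumType_addColumn {m n k j : ℕ} (hmk : m ∣ k) (hj : 0 < j) (hjm : j < m)
    (Q : n.Partition) (hk : Q.parts.card ≤ k) :
    altSumType m (Q.addColumn hk) j = altSumType m Q j := by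
  have hm : 0 < m := hj.trans hjm
  rw [altSumType_eq_sum_range hm _ j (Q.card_addColumn hk).le, altSumType_eq_sum_range hm Q j hk]
  refine Finset.sum_congr rfl fun i _ => ?_
  have hbk : i * m + j ≠ k := by
    rintro rfl
    have : m ∣ j := (Nat.dvd_add_right (Dvd.intro_left i rfl)).1 hmk
    exact absurd (Nat.le_of_dvd hj this) (not_le.2 hjm)
  have ha := nthPart_eq_zero_iff (Q.addColumn hk) (i * m + (j - 1))
  have hb := nthPart_eq_zero_iff (Q.addColumn hk) (i * m + j)
  rw [Q.card_addColumn hk] at ha hb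
  rw [← Q.nthPart_addColumn hk, ← Q.nthPart_addColumn hk]
  omega

lemma Nat.card_subtype_or_of_imp_not {α : Type*} [Finite α] {p q : α → Prop}
    (h : ∀ x, p x → ¬q x) :
    Nat.card {x // p x ∨ q x} = Nat.card {x // p x} + Nat.card {x // q x} := by
  classical
  rw [Nat.card_congr (subtypeOrEquiv p q fun r hp hq x hr => h x (hp x hr) (hq x hr)),
    Nat.card_sum]

lemma aN_eq_zero_of_lt {N s1 s2 n : ℕ} (h : n < N) : aN N s1 s2 n = 0 := by
  rw [aN, Nat.card_eq_zero]
  exact Or.inl ⟨fun ⟨P, hP, _⟩ => absurd (hP ▸ P.card_parts_le) (not_le.2 h)⟩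

lemma aN_add_of_three_dvd {k : ℕ} (hk : 3 ∣ k) (hk0 : k ≠ 0) (s1 s2 n : ℕ) :
    aN k s1 s2 (n + k) = aN (k - 2) s1 s2 n + aN (k - 1) s1 s2 n + aN k s1 s2 n := by
  let S : n.Partition → Prop := fun Q =>
    (∀ p, Q.parts.count p ≤ 2) ∧ altSumType 3 Q 1 = s1 ∧ altSumType 3 Q 2 = s2
  have hcol : aN k s1 s2 (n + k) =
      Nat.card {Q : n.Partition // Q.parts.card ≤ k ∧ k - Q.parts.card ≤ 2 ∧ S Q} := by
    refine Nat.card_congr ((Equiv.subtypeSubtypeEquivSubtypeInter _ _).symm.trans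
      (((Nat.Partition.addColumnEquiv n k).subtypeEquiv fun Q => ?_).symm.trans
        (Equiv.subtypeSubtypeEquivSubtypeInter _ _)))
    simp only [Nat.Partition.addColumnEquiv, Equiv.coe_fn_mk, S,
      Nat.Partition.forall_count_addColumn_le_iff,
      altSumType_addColumn hk one_pos (by norm_num : 1 < 3),
      altSumType_addColumn hk two_pos (by norm_num : 2 < 3)]
    tauto
  have hcard : ∀ Q : n.Partition, Q.parts.card ≤ k ∧ k - Q.parts.card ≤ 2 ↔
      Q.parts.card = k - 2 ∨ Q.parts.card = k - 1 ∨ Q.parts.card = k := fun Q => by omega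
  simp only [← and_assoc, hcard, or_and_right] at hcol
  rw [hcol, Nat.card_subtype_or_of_imp_not, Nat.card_subtype_or_of_imp_not, add_assoc]
  · rfl
  · rintro Q ⟨h1, -⟩ ⟨h2, -⟩; omega
  · rintro Q ⟨h1, -⟩ (⟨h2, -⟩ | ⟨h2, -⟩) <;> omega

lemma coeff_Aser {M : ℕ} (hM : M ≠ 0) (e : Fin 3 →₀ ℕ) :
    MvPowerSeries.coeff e (Aser M) = aN M (e 0) (e 1) (e 2) := by
  simp only [Aser, hM]
  change (if 1 ≤ e 2 then (aN M (e 0) (e 1) (e 2) : ℤ) else 0) = _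
  split_ifs with he
  · rfl
  · rw [aN_eq_zero_of_lt (by omega), Nat.cast_zero]

lemma Aser_eq_mul_Qv_pow {k : ℕ} (hk : 3 ∣ k) (hk0 : k ≠ 0) :
    Aser k = (Aser (k - 2) + Aser (k - 1) + Aser k) * Qv ^ k := by
  ext e
  rw [Qv, MvPowerSeries.X_pow_eq, MvPowerSeries.coeff_mul_monomial, mul_one, coeff_Aser hk0]
  split_ifs with he <;> rw [Finsupp.single_le_iff] at he
  · obtain ⟨n, hn⟩ := Nat.exists_eq_add_of_le' he
    simp only [map_add, coeff_Aser hk0, coeff_Aser (show k - 2 ≠ 0 by omega),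
      coeff_Aser (show k - 1 ≠ 0 by omega), Finsupp.tsub_apply, Finsupp.single_apply]
    simp [hn, aN_add_of_three_dvd hk hk0]
  · rw [aN_eq_zero_of_lt (not_le.1 he), Nat.cast_zero]

lemma Pser_succ (m : ℕ) : Pser (m + 1) = Pser m + Aser (m + 1) :=
  Finset.sum_range_succ _ _

theorem stmt13 (N : ℕ) (hN : 1 ≤ N) :
    Pser (3 * N) * (1 - Qv ^ (3 * N)) = Pser (3 * N - 1) - Pser (3 * N - 3) * Qv ^ (3 * N) := by
  have hA := Aser_eq_mul_Qv_pow (dvd_mul_right 3 N) (by omega)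
  obtain ⟨m, hm⟩ : ∃ m, 3 * N = m + 3 := ⟨3 * N - 3, by omega⟩
  rw [hm, show m + 3 - 2 = m + 1 by omega, show m + 3 - 1 = m + 2 by omega] at hA
  rw [hm, show m + 3 - 1 = m + 2 by omega, Nat.add_sub_cancel]
  simp only [Pser_succ]
  linear_combination hA
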